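/- Heisenberg distortion inequality: for every integer d ≥ 1, define s : [0,∞) → ℝ by s(θ) := θ·sin(θ/2)^{2d−1}·(sin(θ/2) − (θ/2)·cos(θ/2)). Then s(tθ) ≥ t^{2d+3}·s(θ) for all t ∈ [0,1] and all θ ∈ [0,2π]. Equivalently, the Heisenberg distortion coefficient satisfies β^{ℍ^d}_t(θ) ≥ t^{2d+3} for all t ∈ [0,1] and θ ∈ [0,2π). -/

import Mathlib

open Real

noncomputable section

namespace Heisenberg

/-- The Heisenberg model function
`s(θ) = θ · sin(θ/2)^{2d-1} · (sin(θ/2) - (θ/2)·cos(θ/2))`. -/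
def heisS (d : ℕ) (θ : ℝ) : ℝ :=
  θ * Real.sin (θ / 2) ^ (2 * d - 1) * (Real.sin (θ / 2) - θ / 2 * Real.cos (θ / 2))

open Classical in
/-- The Heisenberg distortion coefficient: `β_t(0) = t^{2d+3}` and
`β_t(θ) = s(tθ)/s(θ)` for `0 < θ < 2π`. -/
def heisBeta (d : ℕ) (t θ : ℝ) : ℝ :=
  if θ = 0 then t ^ (2 * d + 3) else heisS d (t * θ) / heisS d θ

lemma sin_smul_le {t x : ℝ} (ht0 : 0 ≤ t) (ht1 : t ≤ 1) (hx0 : 0 ≤ x) (hx1 : x ≤ Real.pi) :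
    t * Real.sin x ≤ Real.sin (t * x) := by
  have hc := strictConcaveOn_sin_Icc.concaveOn
  have h0 : (0:ℝ) ∈ Set.Icc 0 Real.pi := ⟨le_refl 0, Real.pi_pos.le⟩
  have hxmem : x ∈ Set.Icc 0 Real.pi := ⟨hx0, hx1⟩
  have := hc.2 h0 hxmem (by linarith : (0:ℝ) ≤ 1 - t) ht0 (by ring)
  simpa using this

/-- The auxiliary function `g(y) = sin y - y cos y`. -/
def gfun (y : ℝ) : ℝ := Real.sin y - y * Real.cos y

lemma gfun_hasDerivAt (x : ℝ) : HasDerivAt gfun (x * Real.sin x) x := by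
  have h1 : HasDerivAt Real.sin (Real.cos x) x := Real.hasDerivAt_sin x
  have h2 : HasDerivAt (fun y => y * Real.cos y) (1 * Real.cos x + x * (-Real.sin x)) x :=
    (hasDerivAt_id x).mul (Real.hasDerivAt_cos x)
  have : HasDerivAt gfun (Real.cos x - (1 * Real.cos x + x * (-Real.sin x))) x := h1.sub h2
  convert this using 1
  ring

lemma gfun_cont : Continuous gfun := by unfold gfun; continuity

lemma gfun_strictMono : StrictMonoOn gfun (Set.Icc 0 Real.pi) := by
  apply strictMonoOn_of_deriv_pos (convex_Icc 0 Real.pi) gfun_cont.continuousOn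
  intro x hx
  rw [interior_Icc] at hx
  rw [(gfun_hasDerivAt x).deriv]
  exact mul_pos hx.1 (Real.sin_pos_of_pos_of_lt_pi hx.1 hx.2)

lemma gfun_pos {x : ℝ} (hx0 : 0 < x) (hx1 : x ≤ Real.pi) : 0 < gfun x := by
  have := gfun_strictMono ⟨le_refl 0, Real.pi_pos.le⟩ ⟨hx0.le, hx1⟩ hx0
  simpa [gfun] using this

lemma gfun_nonneg {x : ℝ} (hx0 : 0 ≤ x) (hx1 : x ≤ Real.pi) : 0 ≤ gfun x := by
  rcases eq_or_lt_of_le hx0 with h | h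
  · simp [gfun, ← h]
  · exact (gfun_pos h hx1).le

lemma gfun_smul_le {t : ℝ} (ht0 : 0 ≤ t) (ht1 : t ≤ 1) {x : ℝ} (hx0 : 0 ≤ x)
    (hx1 : x ≤ Real.pi) : t ^ 3 * gfun x ≤ gfun (t * x) := by
  have key : MonotoneOn (fun y => gfun (t * y) - t ^ 3 * gfun y) (Set.Icc 0 Real.pi) := by
    apply monotoneOn_of_deriv_nonneg (convex_Icc 0 Real.pi)
    · exact ((gfun_cont.comp (continuous_const.mul continuous_id)).sub
        (continuous_const.mul gfun_cont)).continuousOn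
    · intro y hy
      have h1 : HasDerivAt (fun y => gfun (t * y)) (t * y * Real.sin (t * y) * t) y :=
        (gfun_hasDerivAt (t * y)).comp y (by simpa using (hasDerivAt_id y).const_mul t)
      have h2 : HasDerivAt (fun y => t ^ 3 * gfun y) (t ^ 3 * (y * Real.sin y)) y :=
        (gfun_hasDerivAt y).const_mul (t ^ 3)
      exact (h1.sub h2).differentiableAt.differentiableWithinAt
    · intro y hy
      rw [interior_Icc] at hy
      have h1 : HasDerivAt (fun y => gfun (t * y)) (t * y * Real.sin (t * y) * t) y :=
        (gfun_hasDerivAt (t * y)).comp y (by simpa using (hasDerivAt_id y).const_mul t)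
      have h2 : HasDerivAt (fun y => t ^ 3 * gfun y) (t ^ 3 * (y * Real.sin y)) y :=
        (gfun_hasDerivAt y).const_mul (t ^ 3)
      rw [show deriv (fun y => gfun (t * y) - t ^ 3 * gfun y) y = _ from (h1.sub h2).deriv]
      have hsin : t * Real.sin y ≤ Real.sin (t * y) :=
        sin_smul_le ht0 ht1 hy.1.le hy.2.le
      nlinarith [hy.1.le, sq_nonneg t, mul_nonneg (mul_nonneg (sq_nonneg t) hy.1.le)
        (sub_nonneg.2 hsin)]
  have h0 : (0:ℝ) ∈ Set.Icc 0 Real.pi := ⟨le_refl 0, Real.pi_pos.le⟩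
  have := key h0 ⟨hx0, hx1⟩ hx0
  simp only [mul_zero, gfun] at this ⊢
  simp only [Real.sin_zero, Real.cos_zero, mul_zero, zero_mul, sub_zero, mul_one] at this
  linarith

lemma heisS_key (d : ℕ) (hd : 1 ≤ d) {t : ℝ} (ht0 : 0 ≤ t) (ht1 : t ≤ 1) {θ : ℝ}
    (hθ0 : 0 ≤ θ) (hθ2 : θ ≤ 2 * Real.pi) :
    t ^ (2 * d + 3) * heisS d θ ≤ heisS d (t * θ) := by
  set x := θ / 2 with hx
  have hx0 : 0 ≤ x := by positivity
  have hx1 : x ≤ Real.pi := by rw [hx]; linarith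
  have htθ : 0 ≤ t * θ := mul_nonneg ht0 hθ0
  have hS1 : heisS d θ = θ * Real.sin x ^ (2 * d - 1) * gfun x := rfl
  have htx : t * θ / 2 = t * x := by rw [hx]; ring
  have hS2 : heisS d (t * θ) = (t * θ) * Real.sin (t * x) ^ (2 * d - 1) * gfun (t * x) := by
    rw [heisS, htx]; rfl
  have hsx : 0 ≤ Real.sin x := Real.sin_nonneg_of_nonneg_of_le_pi hx0 hx1
  have ha' : 0 ≤ t * Real.sin x := mul_nonneg ht0 hsx
  have ha : t * Real.sin x ≤ Real.sin (t * x) := sin_smul_le ht0 ht1 hx0 hx1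
  have hpow : (t * Real.sin x) ^ (2 * d - 1) ≤ Real.sin (t * x) ^ (2 * d - 1) :=
    pow_le_pow_left₀ ha' ha _
  have hb' : 0 ≤ t ^ 3 * gfun x := mul_nonneg (by positivity) (gfun_nonneg hx0 hx1)
  have hb : t ^ 3 * gfun x ≤ gfun (t * x) := gfun_smul_le ht0 ht1 hx0 hx1
  have hexp : 2 * d + 3 = 1 + (2 * d - 1) + 3 := by omega
  have hstx : 0 ≤ Real.sin (t * x) := ha'.trans ha
  calc t ^ (2 * d + 3) * heisS d θ
      = (t * θ) * (t * Real.sin x) ^ (2 * d - 1) * (t ^ 3 * gfun x) := by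
        rw [hS1, hexp, pow_add, pow_add, pow_one, mul_pow]; ring
    _ ≤ (t * θ) * Real.sin (t * x) ^ (2 * d - 1) * (t ^ 3 * gfun x) := by
        apply mul_le_mul_of_nonneg_right (mul_le_mul_of_nonneg_left hpow htθ) hb'
    _ ≤ (t * θ) * Real.sin (t * x) ^ (2 * d - 1) * gfun (t * x) := by
        apply mul_le_mul_of_nonneg_left hb
          (mul_nonneg htθ (pow_nonneg hstx _))
    _ = heisS d (t * θ) := hS2.symm

/-- The Heisenberg distortion inequality: `s(tθ) ≥ t^{2d+3} s(θ)` for all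
`t ∈ [0,1]`, `θ ∈ [0,2π]`; equivalently `β^{ℍ^d}_t(θ) ≥ t^{2d+3}` for all `t ∈ [0,1]` and
`θ ∈ [0,2π)`. -/
theorem heisenberg_distortion_inequality (d : ℕ) (hd : 1 ≤ d) :
    (∀ t ∈ Set.Icc (0:ℝ) 1, ∀ θ ∈ Set.Icc (0:ℝ) (2 * Real.pi),
      t ^ (2 * d + 3) * heisS d θ ≤ heisS d (t * θ)) ∧
    (∀ t ∈ Set.Icc (0:ℝ) 1, ∀ θ ∈ Set.Ico (0:ℝ) (2 * Real.pi),
      t ^ (2 * d + 3) ≤ heisBeta d t θ) := by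
  constructor
  · intro t ht θ hθ
    exact heisS_key d hd ht.1 ht.2 hθ.1 hθ.2
  · intro t ht θ hθ
    by_cases hθ0 : θ = 0
    · simp [heisBeta, hθ0]
    · rw [heisBeta, if_neg hθ0]
      have hθpos : 0 < θ := lt_of_le_of_ne hθ.1 (Ne.symm hθ0)
      have hx0 : 0 < θ / 2 := by positivity
      have hx1 : θ / 2 < Real.pi := by linarith [hθ.2]
      have hSpos : 0 < heisS d θ := by
        have h1 : 0 < Real.sin (θ / 2) := Real.sin_pos_of_pos_of_lt_pi hx0 hx1
        have h2 : 0 < gfun (θ / 2) := gfun_pos hx0 hx1.le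
        have : heisS d θ = θ * Real.sin (θ / 2) ^ (2 * d - 1) * gfun (θ / 2) := rfl
        rw [this]
        positivity
      rw [le_div_iff₀ hSpos]
      exact heisS_key d hd ht.1 ht.2 hθ.1 (by linarith [hθ.2])

end Heisenberg
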